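/- Let p be a stochastic choice function on a menu M and its two-element subsets, and let i,j ∈ M be a pair over which p(·|M) is not bounded in a cycle, i.e. δ_ij(M) ≠ 0 and (i,j) belongs to no sign-consistent cycle with strictly positive or strictly negative common sign on any subset M' ⊆ M. Then every MSC model rationalizing p on M satisfies q_ij(M) = 0. -/

import Mathlib

open Finset

variable {X : Type*} [DecidableEq X]

/-- The menus relevant to an MSC model on `M`: `M` itself and the two-element subsets of `M`. -/
def RelMenu (M N : Finset X) : Prop := N = M ∨ (N ⊆ M ∧ N.card = 2)

/-- `Q` is row-stochastic on `N`: nonnegative entries, rows summing to 1. -/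
def RowStochOn (N : Finset X) (Q : X → X → ℝ) : Prop :=
  (∀ i ∈ N, ∀ j ∈ N, 0 ≤ Q i j) ∧ ∀ i ∈ N, ∑ j ∈ N, Q i j = 1

/-- The axioms of an MSC model on the menu `M`: row-stochasticity on relevant menus,
(A1) prolonged consideration, (A2) pairwise comparability on binary sets, (A3) TR-IIA. -/
def IsMSC (M : Finset X) (q : Finset X → X → X → ℝ) : Prop :=
  (∀ N, RelMenu M N → RowStochOn N (q N)) ∧
  (∀ N, RelMenu M N → ∀ i ∈ N, 0 < q N i i) ∧
  (∀ i ∈ M, ∀ j ∈ M, i ≠ j → q {i, j} i j = 0 → 0 < q {i, j} j i) ∧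
  (∀ N, RelMenu M N → ∀ i ∈ N, ∀ j ∈ N, i ≠ j →
    q {i, j} i j * q N j i = q {i, j} j i * q N i j)

/-- `p` is a stochastic choice function. -/
def IsSCF (p : Finset X → X → ℝ) : Prop :=
  ∀ N : Finset X, N.Nonempty →
    (∀ i, 0 ≤ p N i) ∧ (∀ i, i ∉ N → p N i = 0) ∧ ∑ i ∈ N, p N i = 1

/-- `σ` is a stationary (row) vector of `Q` on `N`, i.e. `σ (I - Q) = 0` on `N`. -/
def StationaryOn (N : Finset X) (Q : X → X → ℝ) (σ : X → ℝ) : Prop :=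
  ∀ j ∈ N, ∑ i ∈ N, σ i * Q i j = σ j

/-- The MSC model `q` rationalizes `p` on the menu `M`. -/
def Rationalizes (M : Finset X) (q : Finset X → X → X → ℝ) (p : Finset X → X → ℝ) : Prop :=
  IsMSC M q ∧ ∀ N, RelMenu M N → StationaryOn N (q N) (p N)

/-- The weighted difference in choice probabilities `δ_ij(M)`. -/
def delta (p : Finset X → X → ℝ) (M : Finset X) (i j : X) : ℝ :=
  p M i * p {i, j} j - p {i, j} i * p M j

/-- The set of ordered pairs of consecutive elements (with wrap-around) of a list. -/
def cyclePairs (c : List X) : List (X × X) := c.zip (c.rotate 1)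

/-- `c` is a cycle of distinct alternatives lying in (a subset of) `M`. -/
def IsCycleIn (M : Finset X) (c : List X) : Prop :=
  c.Nodup ∧ 2 ≤ c.length ∧ ∀ x ∈ c, x ∈ M

/-- All pairs of the cycle have strictly positive `δ`. -/
def PosConsistent (p : Finset X → X → ℝ) (M : Finset X) (c : List X) : Prop :=
  ∀ pr ∈ cyclePairs c, 0 < delta p M pr.1 pr.2

/-- All pairs of the cycle have strictly negative `δ`. -/
def NegConsistent (p : Finset X → X → ℝ) (M : Finset X) (c : List X) : Prop :=
  ∀ pr ∈ cyclePairs c, delta p M pr.1 pr.2 < 0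

/-- `p(·|M)` is bounded in a cycle over the pair `(i, j)`. -/
def BoundedInCycle (p : Finset X → X → ℝ) (M : Finset X) (i j : X) : Prop :=
  delta p M i j = 0 ∨
    ∃ c : List X, IsCycleIn M c ∧ (i, j) ∈ cyclePairs c ∧
      (PosConsistent p M c ∨ NegConsistent p M c)

/-!
The net flow `f a b = p(a|M) q_ab(M) - p(b|M) q_ba(M)` of the chain `Q(M)` in its stationary
distribution is skew-symmetric with zero divergence, i.e. a circulation on `M`. Stationarity on a
binary menu `{a, b}` together with TR-IIA gives `p(b|{a,b}) f a b = q_ab(M) δ_ab(M)`, so positive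
net flow along an edge forces a positive `δ` on it, and `q_ij(M) ≠ 0` forces `f i j ≠ 0`.
A circulation with positive flow on `(i, j)` carries a cycle through `(i, j)` of edges with positive
flow: the set of vertices from which `i` is reachable along such edges receives no net inflow,
so it contains `j`. This gives a sign-consistent cycle through `(i, j)`.
-/

theorem List.exists_isChain_nodup_of_reflTransGen {α : Type*} {R : α → α → Prop} {a b : α}
    (h : Relation.ReflTransGen R a b) (hab : a ≠ b) :
    ∃ l, (a :: l ++ [b]).IsChain R ∧ (a :: l ++ [b]).Nodup := by
  classical
  induction h using Relation.ReflTransGen.head_induction_on with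
  | refl => exact absurd rfl hab
  | @head a c hac hcb ih =>
    by_cases hcb' : c = b
    · subst hcb'
      exact ⟨[], by simpa using hac, by simpa using hab⟩
    obtain ⟨l, hchain, hnodup⟩ := ih hcb'
    by_cases ha : a ∈ c :: l
    · obtain ⟨s, t, hst⟩ := List.append_of_mem ha
      have hsuffix : a :: t ++ [b] <:+ c :: l ++ [b] := ⟨s, by simp [hst]⟩
      exact ⟨t, hchain.suffix hsuffix, hnodup.sublist hsuffix.sublist⟩
    · exact ⟨c :: l, List.isChain_cons_cons.2 ⟨hac, hchain⟩,
        List.nodup_cons.2 ⟨by simpa [hab] using ha, hnodup⟩⟩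

theorem cyclePairs_cons {α : Type*} (a : α) (l : List α) :
    cyclePairs (a :: l) = (a :: l).zip (l ++ [a]) := by
  rw [cyclePairs, List.rotate_cons_succ, List.rotate_zero]

theorem IsCycleIn.mem_of_mem_cyclePairs {α : Type*} {M : Finset α} {c : List α} {pr : α × α}
    (hc : IsCycleIn M c) (h : pr ∈ cyclePairs c) : pr.1 ∈ M ∧ pr.2 ∈ M := by
  obtain ⟨h1, h2⟩ := List.of_mem_zip h
  exact ⟨hc.2.2 _ h1, hc.2.2 _ (List.mem_rotate.1 h2)⟩

def IsCirculation {α : Type*} (M : Finset α) (f : α → α → ℝ) : Prop :=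
  (∀ a b, f a b = -f b a) ∧ ∀ b ∈ M, ∑ a ∈ M, f a b = 0

namespace IsCirculation

variable {α : Type*} {M : Finset α} {f : α → α → ℝ}

theorem neg (hf : IsCirculation M f) : IsCirculation M (-f) :=
  ⟨fun a b => congrArg Neg.neg (hf.1 a b), fun b hb => by
    simp only [Pi.neg_apply, sum_neg_distrib, hf.2 b hb, neg_zero]⟩

theorem eq_zero_of_closed [DecidableEq α] (hf : IsCirculation M f) {T : Finset α} (hTM : T ⊆ M)
    (hT : ∀ b ∈ T, ∀ a ∈ M, 0 < f a b → a ∈ T) :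
    ∀ b ∈ T, ∀ a ∈ M \ T, f a b = 0 := by
  have hinflow : ∀ b ∈ T, ∀ a ∈ M \ T, f a b ≤ 0 := fun b hb a ha =>
    not_lt.1 fun h => (mem_sdiff.1 ha).2 (hT b hb a (mem_sdiff.1 ha).1 h)
  have hinternal : ∑ b ∈ T, ∑ a ∈ T, f a b = 0 := by
    have hswap : ∑ b ∈ T, ∑ a ∈ T, f a b = -∑ b ∈ T, ∑ a ∈ T, f a b := by
      calc ∑ b ∈ T, ∑ a ∈ T, f a b = ∑ a ∈ T, ∑ b ∈ T, f a b := Finset.sum_comm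
        _ = ∑ a ∈ T, ∑ b ∈ T, -f b a :=
          sum_congr rfl fun a _ => sum_congr rfl fun b _ => hf.1 a b
        _ = -∑ b ∈ T, ∑ a ∈ T, f a b := by simp only [sum_neg_distrib]
    linarith
  have htotal : ∑ b ∈ T, ∑ a ∈ M \ T, f a b = 0 := by
    have hdiv : ∑ b ∈ T, ∑ a ∈ M, f a b = 0 := sum_eq_zero fun b hb => hf.2 b (hTM hb)
    simp_rw [← sum_sdiff hTM] at hdiv
    rwa [sum_add_distrib, hinternal, add_zero] at hdiv
  intro b hb a ha
  have hb0 := (sum_eq_zero_iff_of_nonpos fun b hb => sum_nonpos (hinflow b hb)).1 htotal b hb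
  exact (sum_eq_zero_iff_of_nonpos (hinflow b hb)).1 hb0 a ha

theorem exists_cycle (hf : IsCirculation M f) {i j : α} (hi : i ∈ M) (hj : j ∈ M)
    (hij : 0 < f i j) :
    ∃ c, IsCycleIn M c ∧ (i, j) ∈ cyclePairs c ∧
      ∀ pr ∈ cyclePairs c, 0 < f pr.1 pr.2 := by
  classical
  set R : α → α → Prop := fun a b => a ∈ M ∧ 0 < f a b
  set T := M.filter (Relation.ReflTransGen R · i)
  have hclosed : ∀ b ∈ T, ∀ a ∈ M, 0 < f a b → a ∈ T := fun b hb a ha hab =>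
    mem_filter.2 ⟨ha, .head ⟨ha, hab⟩ (mem_filter.1 hb).2⟩
  have hjT : j ∈ T := by
    by_contra hjT
    have hji : f j i = 0 := hf.eq_zero_of_closed (filter_subset _ _) hclosed i
      (mem_filter.2 ⟨hi, .refl⟩) j (mem_sdiff.2 ⟨hj, hjT⟩)
    linarith [hf.1 i j]
  have hji : j ≠ i := by
    rintro rfl
    linarith [hf.1 j j]
  obtain ⟨l, hchain, hnodup⟩ :=
    List.exists_isChain_nodup_of_reflTransGen (mem_filter.1 hjT).2 hji
  have hcycle : List.Forall₂ R (i :: j :: l) (j :: l ++ [i]) :=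
    List.isChain_cons_append_singleton_iff_forall₂.1
      (List.isChain_cons_cons.2 ⟨⟨hi, hij⟩, hchain⟩)
  obtain ⟨hmem, hpos⟩ := (List.forall₂_and_left _ _).1 hcycle
  refine ⟨i :: j :: l, ⟨List.nodup_append_comm.1 hnodup, by simp, hmem⟩,
    by simp [cyclePairs_cons], fun pr hpr => ?_⟩
  rw [cyclePairs_cons] at hpr
  exact (List.forall₂_iff_zip.1 hpos).2 hpr

end IsCirculation

def netFlow {α : Type*} (σ : α → ℝ) (Q : α → α → ℝ) (a b : α) : ℝ :=
  σ a * Q a b - σ b * Q b a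

theorem isCirculation_netFlow {α : Type*} {N : Finset α} {Q : α → α → ℝ} {σ : α → ℝ}
    (hQ : RowStochOn N Q) (hσ : StationaryOn N Q σ) : IsCirculation N (netFlow σ Q) :=
  ⟨fun a b => by unfold netFlow; ring, fun b hb => by
    simp only [netFlow, sum_sub_distrib, hσ b hb, ← mul_sum, hQ.2 b hb, mul_one, sub_self]⟩

theorem delta_swap (p : Finset X → X → ℝ) (M : Finset X) (a b : X) :
    delta p M a b = -delta p M b a := by
  unfold delta
  rw [pair_comm]
  ring

theorem relMenu_pair {M : Finset X} {a b : X} (ha : a ∈ M) (hb : b ∈ M) (hab : a ≠ b) :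
    RelMenu M {a, b} :=
  Or.inr ⟨insert_subset ha (singleton_subset_iff.2 hb), card_pair hab⟩

namespace Rationalizes

variable {M : Finset X} {q : Finset X → X → X → ℝ} {p : Finset X → X → ℝ} {a b : X}

theorem pair_balance (hq : Rationalizes M q p) (ha : a ∈ M) (hb : b ∈ M) (hab : a ≠ b) :
    p {a, b} a * q {a, b} a b = p {a, b} b * q {a, b} b a := by
  have hN := relMenu_pair ha hb hab
  have hrow := (hq.1.1 _ hN).2 b (by simp)
  have hstat := hq.2 _ hN b (by simp)
  rw [sum_pair hab] at hrow hstat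
  linear_combination hstat - p {a, b} b * hrow

theorem mul_pair_eq (hq : Rationalizes M q p) (ha : a ∈ M) (hb : b ∈ M) (hab : a ≠ b) :
    q M a b * p {a, b} a = p {a, b} b * q M b a := by
  have hN := relMenu_pair ha hb hab
  have hbal := hq.pair_balance ha hb hab
  have htr := hq.1.2.2.2 M (Or.inl rfl) a ha b hb hab
  have hα := (hq.1.1 _ hN).1 a (by simp) b (by simp)
  have hβ := (hq.1.1 _ hN).1 b (by simp) a (by simp)
  have hsum : 0 < q {a, b} a b + q {a, b} b a := by
    rcases hα.eq_or_lt with h | h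
    · linarith [hq.1.2.2.1 a ha b hb hab h.symm]
    · linarith
  have hprod : (q {a, b} a b + q {a, b} b a) *
      (q M a b * p {a, b} a - p {a, b} b * q M b a) = 0 := by
    linear_combination (q M a b + q M b a) * hbal - (p {a, b} a + p {a, b} b) * htr
  exact sub_eq_zero.1 ((mul_eq_zero.1 hprod).resolve_left hsum.ne')

theorem pos_pair_of_ne_zero (hp : IsSCF p) (hq : Rationalizes M q p) (ha : a ∈ M) (hb : b ∈ M)
    (hab : a ≠ b) (h : q M a b ≠ 0) : 0 < p {a, b} b := by
  obtain ⟨hnn, -, hsum⟩ := hp {a, b} (insert_nonempty _ _)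
  rw [sum_pair hab] at hsum
  refine (hnn b).lt_of_ne fun h0 => h ?_
  have heq := hq.mul_pair_eq ha hb hab
  rwa [← h0, zero_mul, show p {a, b} a = 1 by linarith, mul_one] at heq

theorem pair_mul_netFlow (hq : Rationalizes M q p) (ha : a ∈ M) (hb : b ∈ M) (hab : a ≠ b) :
    p {a, b} b * netFlow (p M) (q M) a b = q M a b * delta p M a b := by
  unfold netFlow delta
  linear_combination p M b * hq.mul_pair_eq ha hb hab

theorem delta_pos_of_netFlow_pos (hp : IsSCF p) (hq : Rationalizes M q p) (ha : a ∈ M)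
    (hb : b ∈ M) (h : 0 < netFlow (p M) (q M) a b) : 0 < delta p M a b := by
  have hab : a ≠ b := by
    rintro rfl
    simp [netFlow] at h
  have hqnn := (hq.1.1 M (Or.inl rfl)).1
  have hqab : q M a b ≠ 0 := by
    intro h0
    have hpb := (hp M ⟨a, ha⟩).1 b
    have hqba := hqnn b hb a ha
    rw [netFlow, h0] at h
    nlinarith
  have hprod : 0 < q M a b * delta p M a b := by
    rw [← hq.pair_mul_netFlow ha hb hab]
    exact mul_pos (hq.pos_pair_of_ne_zero hp ha hb hab hqab) h
  exact pos_of_mul_pos_right hprod (hqnn a ha b hb)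

end Rationalizes

theorem stmt9_general (M : Finset X)
    (p : Finset X → X → ℝ) (hp : IsSCF p)
    (i j : X) (hi : i ∈ M) (hj : j ∈ M)
    (hnb : ¬ BoundedInCycle p M i j) :
    ∀ q : Finset X → X → X → ℝ, Rationalizes M q p → q M i j = 0 := by
  intro q hq
  by_contra hq0
  have hδ : delta p M i j ≠ 0 := fun h => hnb (Or.inl h)
  have hij : i ≠ j := by
    rintro rfl
    exact hδ (by unfold delta; ring)
  have hflow : netFlow (p M) (q M) i j ≠ 0 :=
    right_ne_zero_of_mul (hq.pair_mul_netFlow hi hj hij ▸ mul_ne_zero hq0 hδ)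
  have hcirc := isCirculation_netFlow (hq.1.1 M (Or.inl rfl)) (hq.2 M (Or.inl rfl))
  rcases hflow.lt_or_gt with hneg | hpos
  · obtain ⟨c, hc, hijc, hcf⟩ := hcirc.neg.exists_cycle hi hj (neg_pos.2 hneg)
    refine hnb (Or.inr ⟨c, hc, hijc, Or.inr fun pr hpr => ?_⟩)
    obtain ⟨h1, h2⟩ := hc.mem_of_mem_cyclePairs hpr
    rw [delta_swap, neg_lt_zero]
    exact hq.delta_pos_of_netFlow_pos hp h2 h1 (by rw [hcirc.1]; exact hcf pr hpr)
  · obtain ⟨c, hc, hijc, hcf⟩ := hcirc.exists_cycle hi hj hpos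
    refine hnb (Or.inr ⟨c, hc, hijc, Or.inl fun pr hpr => ?_⟩)
    obtain ⟨h1, h2⟩ := hc.mem_of_mem_cyclePairs hpr
    exact hq.delta_pos_of_netFlow_pos hp h1 h2 (hcf pr hpr)

/-- If `p(·|M)` is not bounded in a cycle over the pair `(i, j)`, then every MSC model
rationalizing `p` on `M` has `q_ij(M) = 0`. -/
theorem stmt9 (M : Finset X) (hM : M.Nonempty)
    (p : Finset X → X → ℝ) (hp : IsSCF p)
    (i j : X) (hi : i ∈ M) (hj : j ∈ M)
    (hnb : ¬ BoundedInCycle p M i j) :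
    ∀ q : Finset X → X → X → ℝ, Rationalizes M q p → q M i j = 0 :=
  stmt9_general M p hp i j hi hj hnb
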